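/- arXiv:0806.0311 — 2 statements merged into one kernel-verified Lean document; each statement's English description precedes it below -/
import Mathlib

section
/- Let r > 0 with r < 1/4, and let Y be a finite set of ℓ ≥ 2 points in the unit torus [0,1)² such that, for the leftmost point x₀ of Y and ρ = max_{y ∈ Y} d(x₀, y), one has 0 < ρ < r/2. Let S = { p ∈ [0,1)² : d(p, y) ≤ r for some y ∈ Y } be the set of points within torus distance r of Y. Then the area (Lebesgue measure) of S satisfies π r² (1 + ρ/(6r)) < area(S) < π r² (1 + 5ρ/(2r)). -/
open MeasureTheory Filter Set

noncomputable section

instance fact01 : Fact ((0:ℝ) < 1) := ⟨one_pos⟩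

/-- The unit flat torus `[0,1)²`, modelled as the product of two unit circles `ℝ/ℤ`. -/
abbrev Torus : Type := AddCircle (1:ℝ) × AddCircle (1:ℝ)

/-- Euclidean distance on the flat unit torus. -/
def torusDist (p q : Torus) : ℝ :=
  Real.sqrt (dist p.1 q.1 ^ 2 + dist p.2 q.2 ^ 2)

/-- The lift of a point of `ℝ/ℤ` to its canonical representative in `[0,1)`. -/
def liftIco (x : AddCircle (1:ℝ)) : ℝ := (AddCircle.equivIco 1 0 x : ℝ)

/-- The geometric graph with radius `r` on the points `X 0, …, X (n-1)` of the torus. -/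
def geomGraph (n : ℕ) (r : ℝ) (X : Fin n → Torus) : SimpleGraph (Fin n) where
  Adj i j := i ≠ j ∧ torusDist (X i) (X j) ≤ r
  symm := by
    constructor
    intro i j h
    exact ⟨h.1.symm, by simpa [torusDist, dist_comm, add_comm] using h.2⟩
  loopless := ⟨fun i h => h.1 rfl⟩

/-- The probability of an event for `n` independent uniform random points on the torus. -/
def Pr (n : ℕ) (E : Set (Fin n → Torus)) : ℝ := (volume E).toReal

/-- `μ(n) = n e^{-π r(n)² n}`. -/
def mu (r : ℕ → ℝ) (n : ℕ) : ℝ := n * Real.exp (-Real.pi * r n ^ 2 * n)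

/-- The number of connected components of size exactly `ℓ`. -/
def K (n ℓ : ℕ) (r : ℝ) (X : Fin n → Torus) : ℕ :=
  Set.ncard {c : (geomGraph n r X).ConnectedComponent | c.supp.ncard = ℓ}

/-- `v` is the leftmost vertex of the (small) set `s`: every vertex of `s` lies to the
right of `v`, i.e. at a horizontal displacement in `[0,1/2)` from `v`. -/
def IsLeftmost {m : ℕ} (X : Fin m → Torus) (s : Set (Fin m)) (v : Fin m) : Prop :=
  v ∈ s ∧ ∀ u ∈ s, liftIco ((X u).1 - (X v).1) < 1/2

/-- The number of connected components of size exactly `ℓ` all of whose vertices are at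
torus distance at most `ε r` from the leftmost vertex of the component. -/
def K' (n ℓ : ℕ) (ε r : ℝ) (X : Fin n → Torus) : ℕ :=
  Set.ncard {c : (geomGraph n r X).ConnectedComponent |
    c.supp.ncard = ℓ ∧ ∃ v, IsLeftmost X c.supp v ∧
      ∀ u ∈ c.supp, torusDist (X u) (X v) ≤ ε * r}

/-- A set of vertices is embeddable if some translation of the torus maps all of its points
into the square `[r,1-r]²`. -/
def Embeddable {m : ℕ} (r : ℝ) (X : Fin m → Torus) (s : Set (Fin m)) : Prop :=
  ∃ a b : ℝ, ∀ u ∈ s,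
    liftIco ((X u).1 + (a : AddCircle (1:ℝ))) ∈ Set.Icc r (1 - r) ∧
    liftIco ((X u).2 + (b : AddCircle (1:ℝ))) ∈ Set.Icc r (1 - r)

/-- A non-embeddable component is solitary if no finite nonempty set of additional points of
the torus, each at distance greater than `r` from every vertex of the component, forms a
non-embeddable connected geometric graph with the same radius `r`. -/
def Solitary (n : ℕ) (r : ℝ) (X : Fin n → Torus) (s : Set (Fin n)) : Prop :=
  ¬ Embeddable r X s ∧
  ¬ ∃ (m : ℕ) (Y : Fin m → Torus), 0 < m ∧
      (∀ k : Fin m, ∀ u ∈ s, r < torusDist (Y k) (X u)) ∧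
      (geomGraph m r Y).Connected ∧ ¬ Embeddable r Y Set.univ

/-- The number of non-solitary connected components of size at least `ℓ`. -/
def Ktilde (n ℓ : ℕ) (r : ℝ) (X : Fin n → Torus) : ℕ :=
  Set.ncard {c : (geomGraph n r X).ConnectedComponent |
    ℓ ≤ c.supp.ncard ∧ ¬ Solitary n r X c.supp}

end

/-!
The `r`-neighbourhood `S` of `Y` lies in the torus ball of radius `r + ρ` around `x₀`, of area at
most `π (r + ρ)²`, and `ρ < r / 2` makes this less than `π r² (1 + 5ρ/(2r))`.
Conversely `S` contains the discs of radius `r` around `x₀` and around a point `y` at distance `ρ`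
from `x₀`. Lifted to the plane and rotated so that `y - x₀ = ρ > 0`, the crescent between the
two discs contains a strip of height `ρ` sheared along an arc of the first circle, of width
`√3 r` and hence of area `√3 r ρ`; so `area S ≥ π r² + √3 r ρ > π r² (1 + ρ/(6r))`.
Both comparisons with the plane use the chart `z ↦ c + (re z, im z)`, which carries Lebesgue
measure on a fundamental square onto Haar measure on the torus and does not increase distances.
-/

open MeasureTheory Set Metric

lemma torusDist_eq_dist_toLp (p q : Torus) :
    torusDist p q = dist (WithLp.toLp 2 p) (WithLp.toLp 2 q) := by
  rw [WithLp.prod_dist_eq_of_L2]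
  rfl

lemma torusDist_comm (p q : Torus) : torusDist p q = torusDist q p := by
  simp only [torusDist_eq_dist_toLp, dist_comm]

lemma torusDist_triangle (p q s : Torus) : torusDist p s ≤ torusDist p q + torusDist q s := by
  simp only [torusDist_eq_dist_toLp]
  exact dist_triangle _ _ _

lemma isClosed_setOf_torusDist_le (c : Torus) (t : ℝ) :
    IsClosed {p : Torus | torusDist p c ≤ t} :=
  isClosed_le (by unfold torusDist; fun_prop) continuous_const

lemma AddCircle.dist_coe_le {p : ℝ} (a b : ℝ) : dist (a : AddCircle p) b ≤ |a - b| := by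
  rw [dist_eq_norm, ← AddCircle.coe_sub]
  exact QuotientAddGroup.norm_mk_le_norm

lemma volume_regionBetween_add_const {f : ℝ → ℝ} (hf : Measurable f) (ρ a b : ℝ) :
    volume (regionBetween f (fun x => f x + ρ) (Ioo a b)) =
      ENNReal.ofReal ρ * ENNReal.ofReal (b - a) := by
  rw [Measure.volume_eq_prod, volume_regionBetween_eq_lintegral hf.aemeasurable
    (hf.add_const ρ).aemeasurable measurableSet_Ioo]
  simp

def shearedStrip (r ρ : ℝ) : Set (ℝ × ℝ) :=
  regionBetween (fun x => √(r ^ 2 - x ^ 2)) (fun x => √(r ^ 2 - x ^ 2) + ρ)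
    (Ioo (-(√3 / 2 * r)) (√3 / 2 * r))

lemma measurableSet_shearedStrip (r ρ : ℝ) : MeasurableSet (shearedStrip r ρ) :=
  measurableSet_regionBetween (by fun_prop) (by fun_prop) measurableSet_Ioo

lemma volume_shearedStrip {ρ : ℝ} (r : ℝ) (hρ : 0 ≤ ρ) :
    volume (shearedStrip r ρ) = ENNReal.ofReal (√3 * r * ρ) := by
  rw [shearedStrip, volume_regionBetween_add_const (by fun_prop), ← ENNReal.ofReal_mul hρ]
  congr 1
  ring

namespace Complex

lemma measurePreserving_im_re : MeasurePreserving (fun z : ℂ => (z.im, z.re)) :=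
  Measure.measurePreserving_swap.comp volume_preserving_equiv_real_prod

lemma preimage_im_re_shearedStrip_subset {r ρ : ℝ} (hr : 0 ≤ r) (hρr : ρ ≤ r) :
    (fun z : ℂ => (z.im, z.re)) ⁻¹' shearedStrip r ρ ⊆ closedBall (ρ : ℂ) r \ closedBall 0 r := by
  rintro z ⟨hz_im, hz_lo, hz_hi⟩
  simp only at hz_im hz_lo hz_hi
  set w := √(r ^ 2 - z.im ^ 2)
  have him_sq : z.im ^ 2 < 3 / 4 * r ^ 2 := by
    have := sq_lt_sq' hz_im.1 hz_im.2
    rw [mul_pow, div_pow, Real.sq_sqrt (by norm_num : (0 : ℝ) ≤ 3)] at this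
    linarith
  have hw_sq : w ^ 2 = r ^ 2 - z.im ^ 2 := Real.sq_sqrt (by nlinarith)
  -- cutting the strip at `|im z| < √3 r / 2` keeps `2 w ≥ r ≥ ρ`, so `re z - ρ > w - ρ ≥ -w`
  have hw_half : r / 2 ≤ w := Real.le_sqrt_of_sq_le (by nlinarith)
  have hw0 : 0 ≤ w := Real.sqrt_nonneg _
  constructor
  · rw [mem_closedBall, dist_eq_norm, ← sq_le_sq₀ (norm_nonneg _) hr, Complex.sq_norm,
      normSq_apply]
    simp only [sub_re, ofReal_re, sub_im, ofReal_im, sub_zero]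
    nlinarith [sq_le_sq' (a := z.re - ρ) (b := w) (by linarith) (by linarith)]
  · rw [mem_closedBall_zero_iff, not_le, ← sq_lt_sq₀ hr (norm_nonneg z), Complex.sq_norm,
      normSq_apply]
    nlinarith

lemma ofReal_le_volume_closedBall_union_closedBall_ofReal {r ρ : ℝ} (hρ : 0 ≤ ρ) (hρr : ρ ≤ r) :
    ENNReal.ofReal (Real.pi * r ^ 2 + √3 * r * ρ) ≤
      volume (closedBall (0 : ℂ) r ∪ closedBall (ρ : ℂ) r) := by
  have hr : 0 ≤ r := hρ.trans hρr
  set L := (fun z : ℂ => (z.im, z.re)) ⁻¹' shearedStrip r ρ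
  have hL := preimage_im_re_shearedStrip_subset hr hρr
  calc ENNReal.ofReal (Real.pi * r ^ 2 + √3 * r * ρ)
      = volume (closedBall (0 : ℂ) r) + volume L := by
        rw [volume_closedBall, measurePreserving_im_re.measure_preimage
          (measurableSet_shearedStrip r ρ).nullMeasurableSet, volume_shearedStrip r hρ,
          ← ENNReal.ofReal_pow hr, ← ENNReal.ofReal_coe_nnreal, NNReal.coe_real_pi,
          ← ENNReal.ofReal_mul (by positivity),
          ← ENNReal.ofReal_add (by positivity) (by positivity), mul_comm]
    _ = volume (closedBall (0 : ℂ) r ∪ L) :=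
        (measure_union (disjoint_sdiff_right.mono_right hL)
          ((measurableSet_shearedStrip r ρ).preimage measurePreserving_im_re.measurable)).symm
    _ ≤ volume (closedBall (0 : ℂ) r ∪ closedBall (ρ : ℂ) r) :=
        measure_mono (union_subset_union_right _ (hL.trans sdiff_subset))

lemma ofReal_le_volume_closedBall_union_closedBall {r : ℝ} (u : ℂ) (hu : ‖u‖ ≤ r) :
    ENNReal.ofReal (Real.pi * r ^ 2 + √3 * r * ‖u‖) ≤
      volume (closedBall 0 r ∪ closedBall u r) := by
  set R := rotation (Circle.exp u.arg)
  have hRu : R ‖u‖ = u := by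
    rw [rotation_apply, Circle.coe_exp, mul_comm, norm_mul_exp_arg_mul_I]
  have hpre :
      R ⁻¹' (closedBall 0 r ∪ closedBall u r) = closedBall 0 r ∪ closedBall (‖u‖ : ℂ) r := by
    conv_lhs => rw [← map_zero R, ← hRu]
    rw [preimage_union, R.isometry.preimage_closedBall, R.isometry.preimage_closedBall]
  rw [← R.measurePreserving.measure_preimage
    (measurableSet_closedBall.union measurableSet_closedBall).nullMeasurableSet, hpre]
  exact ofReal_le_volume_closedBall_union_closedBall_ofReal (norm_nonneg u) hu

end Complex

namespace Torus

def fundamentalSquare : Set ℂ := Ioc (-(1 / 2)) (1 / 2) ×ℂ Ioc (-(1 / 2)) (1 / 2)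

def chart (c : Torus) (z : ℂ) : Torus :=
  c + ((z.re : AddCircle (1 : ℝ)), (z.im : AddCircle (1 : ℝ)))

@[simp]
lemma chart_zero (c : Torus) : chart c 0 = c := by
  simp [chart]

lemma mem_fundamentalSquare_of_norm_lt {z : ℂ} (hz : ‖z‖ < 1 / 2) : z ∈ fundamentalSquare := by
  have hre := (abs_lt.1 ((Complex.abs_re_le_norm z).trans_lt hz))
  have him := (abs_lt.1 ((Complex.abs_im_le_norm z).trans_lt hz))
  exact ⟨⟨hre.1, hre.2.le⟩, ⟨him.1, him.2.le⟩⟩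

lemma exists_mem_fundamentalSquare_chart_eq (c y : Torus) :
    ∃ u ∈ fundamentalSquare, chart c u = y := by
  have hIoc : Ioc (-(1 / 2)) (-(1 / 2) + 1) = Ioc (-(1 / 2) : ℝ) (1 / 2) := by norm_num
  let lift (x : AddCircle (1 : ℝ)) : ℝ := AddCircle.equivIoc 1 (-(1 / 2)) x
  have hlift_mem (x) : lift x ∈ Ioc (-(1 / 2) : ℝ) (1 / 2) :=
    hIoc ▸ (AddCircle.equivIoc 1 (-(1 / 2)) x).2
  have hlift_coe (x) : (lift x : AddCircle (1 : ℝ)) = x :=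
    (AddCircle.equivIoc 1 (-(1 / 2))).symm_apply_apply x
  refine ⟨⟨lift (y.1 - c.1), lift (y.2 - c.2)⟩, ⟨hlift_mem _, hlift_mem _⟩, ?_⟩
  ext <;> simp [chart, hlift_coe]

lemma torusDist_chart_le (c : Torus) (z w : ℂ) :
    torusDist (chart c z) (chart c w) ≤ ‖z - w‖ := by
  rw [Complex.norm_eq_sqrt_sq_add_sq, Complex.sub_re, Complex.sub_im, ← sq_abs (_ - _),
    ← sq_abs (z.im - _)]
  unfold torusDist chart
  gcongr <;> simp only [Prod.fst_add, Prod.snd_add, dist_add_left, AddCircle.dist_coe_le]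

lemma torusDist_chart_self (c : Torus) {z : ℂ} (hz : z ∈ fundamentalSquare) :
    torusDist (chart c z) c = ‖z‖ := by
  have habs {x : ℝ} (hx : x ∈ Ioc (-(1 / 2)) (1 / 2)) : ‖(x : AddCircle (1 : ℝ))‖ = |x| :=
    (AddCircle.norm_coe_eq_abs_iff 1 one_ne_zero).2 <| by
      rw [abs_one]
      exact abs_le.2 ⟨hx.1.le, hx.2⟩
  simp only [Complex.norm_eq_sqrt_sq_add_sq, torusDist, chart, Prod.fst_add, Prod.snd_add,
    dist_self_add_left, habs hz.1, habs hz.2, sq_abs]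

lemma measurePreserving_chart (c : Torus) :
    MeasurePreserving (chart c) (volume.restrict fundamentalSquare) volume := by
  have hIoc : Ioc (-(1 / 2)) (-(1 / 2) + 1) = Ioc (-(1 / 2) : ℝ) (1 / 2) := by norm_num
  have hmk := AddCircle.measurePreserving_mk 1 (-(1 / 2))
  rw [hIoc] at hmk
  have hreIm := Complex.volume_preserving_equiv_real_prod.restrict_preimage
    (measurableSet_Ioc.prod measurableSet_Ioc :
      MeasurableSet (Ioc (-(1 / 2) : ℝ) (1 / 2) ×ˢ Ioc (-(1 / 2) : ℝ) (1 / 2)))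
  rw [Measure.volume_eq_prod, ← Measure.prod_restrict] at hreIm
  exact (((measurePreserving_add_left volume c.1).comp hmk).prod
    ((measurePreserving_add_left volume c.2).comp hmk)).comp hreIm

lemma volume_le_volume_chart_image (c : Torus) {E : Set ℂ} (hE : E ⊆ fundamentalSquare) :
    volume E ≤ volume (chart c '' E) := by
  have hchart := measurePreserving_chart c
  calc volume E = volume.restrict fundamentalSquare E := (Measure.restrict_eq_self _ hE).symm
    _ ≤ volume.restrict fundamentalSquare (chart c ⁻¹' (chart c '' E)) :=
      measure_mono (subset_preimage_image _ _)
    _ ≤ (volume.restrict fundamentalSquare).map (chart c) (chart c '' E) :=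
      Measure.le_map_apply hchart.aemeasurable _
    _ = volume (chart c '' E) := by rw [hchart.map_eq]

end Torus

open Torus

lemma volume_setOf_torusDist_le_le (c : Torus) {t : ℝ} (ht : 0 ≤ t) :
    volume {p : Torus | torusDist p c ≤ t} ≤ ENNReal.ofReal (Real.pi * t ^ 2) := by
  have hB := (isClosed_setOf_torusDist_le c t).measurableSet
  have hchart := measurePreserving_chart c
  rw [← hchart.measure_preimage hB.nullMeasurableSet,
    Measure.restrict_apply (hchart.measurable hB)]
  calc _ ≤ volume (closedBall (0 : ℂ) t) := measure_mono <| by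
        rintro z ⟨hz, hsq⟩
        simpa [torusDist_chart_self c hsq] using hz
    _ = ENNReal.ofReal (Real.pi * t ^ 2) := by
        rw [Complex.volume_closedBall, ← ENNReal.ofReal_pow ht, ← ENNReal.ofReal_coe_nnreal,
          NNReal.coe_real_pi, ← ENNReal.ofReal_mul (by positivity), mul_comm]

lemma ofReal_le_volume_setOf_torusDist_le_or {c y : Torus} {r : ℝ} (hy : torusDist y c ≤ r)
    (hr : r + torusDist y c < 1 / 2) :
    ENNReal.ofReal (Real.pi * r ^ 2 + √3 * r * torusDist y c) ≤
      volume {p : Torus | torusDist p c ≤ r ∨ torusDist p y ≤ r} := by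
  obtain ⟨u, hu, rfl⟩ := exists_mem_fundamentalSquare_chart_eq c y
  rw [torusDist_chart_self c hu] at hy hr ⊢
  have hsq : closedBall 0 r ∪ closedBall u r ⊆ fundamentalSquare := by
    rintro z (hz | hz) <;> apply mem_fundamentalSquare_of_norm_lt
    · rw [mem_closedBall_zero_iff] at hz
      linarith [norm_nonneg u]
    · rw [mem_closedBall, dist_eq_norm] at hz
      linarith [norm_le_norm_add_norm_sub' z u]
  calc _ ≤ volume (closedBall 0 r ∪ closedBall u r) :=
        Complex.ofReal_le_volume_closedBall_union_closedBall u hy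
    _ ≤ volume (chart c '' (closedBall 0 r ∪ closedBall u r)) :=
        volume_le_volume_chart_image c hsq
    _ ≤ _ := by
        refine measure_mono (image_subset_iff.2 ?_)
        rintro z (hz | hz)
        · left
          simpa using (torusDist_chart_le c z 0).trans (by simpa using hz)
        · right
          exact (torusDist_chart_le c z u).trans (by rwa [mem_closedBall, dist_eq_norm] at hz)

theorem area_neighbourhood_bounds_general
    (r : ℝ) (hr0 : 0 < r) (hr : r < 1/4)
    (Y : Finset Torus)
    (x₀ : Torus) (hx₀ : x₀ ∈ Y)
    (ρ : ℝ) (hρ : IsGreatest ((fun y => torusDist x₀ y) '' ↑Y) ρ)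
    (hρ0 : 0 < ρ) (hρr : ρ < r / 2) :
    Real.pi * r ^ 2 * (1 + ρ / (6 * r)) <
        (volume {p : Torus | ∃ y ∈ Y, torusDist p y ≤ r}).toReal ∧
      (volume {p : Torus | ∃ y ∈ Y, torusDist p y ≤ r}).toReal <
        Real.pi * r ^ 2 * (1 + 5 * ρ / (2 * r)) := by
  obtain ⟨⟨y, hyY, hy⟩, hmax⟩ := hρ
  set S := {p : Torus | ∃ y ∈ Y, torusDist p y ≤ r}
  have hyx : torusDist y x₀ = ρ := (torusDist_comm _ _).trans hy
  have hlower : ENNReal.ofReal (Real.pi * r ^ 2 + √3 * r * ρ) ≤ volume S :=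
    calc _ ≤ volume {p | torusDist p x₀ ≤ r ∨ torusDist p y ≤ r} :=
          hyx ▸ ofReal_le_volume_setOf_torusDist_le_or (by linarith) (by linarith)
      _ ≤ volume S := measure_mono <| by
          rintro p (hp | hp)
          exacts [⟨x₀, hx₀, hp⟩, ⟨y, hyY, hp⟩]
  have hupper : volume S ≤ ENNReal.ofReal (Real.pi * (r + ρ) ^ 2) := by
    refine (measure_mono ?_).trans (volume_setOf_torusDist_le_le x₀ (by linarith))
    rintro p ⟨z, hzY, hpz⟩
    have hzx : torusDist z x₀ ≤ ρ := torusDist_comm z x₀ ▸ hmax ⟨z, hzY, rfl⟩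
    exact (torusDist_triangle p z x₀).trans (add_le_add hpz hzx)
  have hsqrt3 : 1 < √3 := by rw [Real.lt_sqrt] <;> norm_num
  have hpi := Real.pi_le_four
  constructor
  · calc Real.pi * r ^ 2 * (1 + ρ / (6 * r)) = Real.pi * r ^ 2 + Real.pi / 6 * r * ρ := by
          field_simp
      _ < Real.pi * r ^ 2 + √3 * r * ρ := by gcongr; linarith
      _ ≤ (volume S).toReal := (ENNReal.ofReal_le_iff_le_toReal (measure_ne_top _ _)).1 hlower
  · calc (volume S).toReal ≤ Real.pi * (r + ρ) ^ 2 :=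
          ENNReal.toReal_le_of_le_ofReal (by positivity) hupper
      _ < Real.pi * r ^ 2 * (1 + 5 * ρ / (2 * r)) := by
          field_simp
          nlinarith [Real.pi_pos, mul_pos hr0 hρ0]

/-- Area bounds for the `r`-neighbourhood of a small point set on the
torus: if all `ℓ ≥ 2` points of `Y` lie to the right of the leftmost point `x₀`, and
`ρ = max_{y ∈ Y} d(x₀,y)` satisfies `0 < ρ < r/2` with `r < 1/4`, then
`π r²(1 + ρ/(6r)) < area(S) < π r²(1 + 5ρ/(2r))` where `S` is the set of points at
distance at most `r` from `Y`. -/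
theorem area_neighbourhood_bounds
    (r : ℝ) (hr0 : 0 < r) (hr : r < 1/4)
    (ℓ : ℕ) (hℓ : 2 ≤ ℓ) (Y : Finset Torus) (hY : Y.card = ℓ)
    (x₀ : Torus) (hx₀ : x₀ ∈ Y)
    (hleft : ∀ y ∈ Y, liftIco (y.1 - x₀.1) < 1/2)
    (ρ : ℝ) (hρ : IsGreatest ((fun y => torusDist x₀ y) '' ↑Y) ρ)
    (hρ0 : 0 < ρ) (hρr : ρ < r / 2) :
    Real.pi * r ^ 2 * (1 + ρ / (6 * r)) <
        (volume {p : Torus | ∃ y ∈ Y, torusDist p y ≤ r}).toReal ∧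
      (volume {p : Torus | ∃ y ∈ Y, torusDist p y ≤ r}).toReal <
        Real.pi * r ^ 2 * (1 + 5 * ρ / (2 * r)) :=
  area_neighbourhood_bounds_general r hr0 hr Y x₀ hx₀ ρ hρ hρ0 hρr
end

section
/- Let 0 < ε ≤ 10^{−18} be fixed. Assume μ = Θ(1). Then the probability that G(X;r) contains a connected component of diameter at most εr and size greater than (log n)/37 is O(1/(n^{1.1} log n)). -/
open MeasureTheory Filter Set

/-!
A component of diameter at most `εr` with more than `log n / 37` vertices contains
`k = ⌊log n / 37⌋ + 1` vertices that are pairwise within `εr`. Fixing one of them, the other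
`k - 1` points fall independently into a square of area `(2εr)²` around it, so the union bound
over `k`-sets gives the probability bound `C(n,k) (2εr)^{2(k-1)} ≤ n (e n (2εr)² / k)^{k-1}`.
Since `μ = Θ(1)` forces `π r² n ≤ (1 + o(1)) log n` and `k > log n / 37`, the base is at most
`131 ε² ≤ e^{-78}`, and the bound becomes `e^{78} n^{1 - 78/37} = e^{78} n^{-41/37}`, which
is `O(1/(n^{1.1} log n))`.
-/

open scoped ENNReal

section Clusters

variable {ι α : Type*} [Fintype ι] [DecidableEq ι] [MeasurableSpace α]
  (μ : Measure α) [IsProbabilityMeasure μ]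

theorem measure_pi_setOf_forall_mem_le {i₀ : ι} {T : Finset ι} (hT : i₀ ∉ T)
    {B : α → Set α} {c : ℝ≥0∞} (hB : ∀ z, μ (B z) ≤ c)
    (hA : MeasurableSet {X : ι → α | ∀ j ∈ T, X j ∈ B (X i₀)}) :
    Measure.pi (fun _ => μ) {X : ι → α | ∀ j ∈ T, X j ∈ B (X i₀)} ≤ c ^ T.card := by
  set A := {X : ι → α | ∀ j ∈ T, X j ∈ B (X i₀)}
  have he := measurePreserving_piEquivPiSubtypeProd (fun _ : ι => μ) (· = i₀)
  set e := MeasurableEquiv.piEquivPiSubtypeProd (fun _ : ι => α) (· = i₀)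
  -- once the coordinate `i₀` is fixed, `A` is contained in a box
  have hslice : ∀ a : {i // i = i₀} → α,
      Measure.pi (fun _ => μ) (Prod.mk a ⁻¹' (e.symm ⁻¹' A)) ≤ c ^ T.card := by
    intro a
    let f : ι → ℝ≥0∞ := fun i => if i ∈ T then c else 1
    have hbox : Prod.mk a ⁻¹' (e.symm ⁻¹' A) ⊆
        univ.pi fun i : {i // ¬ i = i₀} => if ↑i ∈ T then B (a ⟨i₀, rfl⟩) else univ := by
      intro Y hY i _
      dsimp only
      split_ifs with hi
      · simpa [e, MeasurableEquiv.piEquivPiSubtypeProd_symm_apply, i.2] using hY i hi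
      · trivial
    calc _ ≤ Measure.pi (fun _ => μ) (univ.pi fun i : {i // ¬ i = i₀} =>
            if ↑i ∈ T then B (a ⟨i₀, rfl⟩) else univ) := measure_mono hbox
      _ ≤ ∏ i : {i // ¬ i = i₀}, f i := by
          rw [Measure.pi_pi]
          gcongr with i
          unfold f
          split_ifs <;> simp [hB]
      _ = c ^ T.card := by
          have h := Fintype.prod_subtype_mul_prod_subtype (· = i₀) f
          rw [Finset.prod_eq_one fun i _ => if_neg <| by rwa [i.2], one_mul] at h
          rw [h, Finset.prod_ite_mem, Finset.univ_inter, Finset.prod_const]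
  rw [← (he.symm _).measure_preimage_equiv A, Measure.prod_apply (e.symm.measurable hA)]
  calc _ ≤ ∫⁻ _, c ^ T.card ∂_ := lintegral_mono hslice
    _ = c ^ T.card := by simp

theorem measure_pi_exists_finset_forall_mem_le {B : α → Set α} {c : ℝ≥0∞}
    (hB : ∀ z, μ (B z) ≤ c)
    (hB_meas : ∀ i j : ι, MeasurableSet {X : ι → α | X j ∈ B (X i)}) (k : ℕ) :
    Measure.pi (fun _ => μ)
        {X : ι → α | ∃ S : Finset ι, S.card = k ∧ ∀ i ∈ S, ∀ j ∈ S, X j ∈ B (X i)} ≤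
      (Fintype.card ι).choose k * c ^ (k - 1) := by
  set F := fun S : Finset ι => {X : ι → α | ∀ i ∈ S, ∀ j ∈ S, X j ∈ B (X i)}
  have hF : ∀ S : Finset ι, S.card = k → Measure.pi (fun _ => μ) (F S) ≤ c ^ (k - 1) := by
    rintro S rfl
    obtain ⟨i₀, hi₀⟩ | rfl := S.eq_empty_or_nonempty.symm
    · calc Measure.pi (fun _ => μ) (F S)
            ≤ Measure.pi (fun _ => μ) {X | ∀ j ∈ S.erase i₀, X j ∈ B (X i₀)} :=
            measure_mono fun X hX j hj => hX i₀ hi₀ j (Finset.mem_of_mem_erase hj)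
        _ ≤ c ^ (S.erase i₀).card :=
            measure_pi_setOf_forall_mem_le μ (Finset.notMem_erase i₀ S) hB
              (by simp only [Set.ofPred_forall]
                  exact Finset.measurableSet_biInter _ fun j _ => hB_meas i₀ j)
        _ = c ^ (S.card - 1) := by rw [Finset.card_erase_of_mem hi₀]
    · simpa using prob_le_one
  calc _ ≤ Measure.pi (fun _ => μ) (⋃ S ∈ Finset.powersetCard k Finset.univ, F S) :=
        measure_mono <| by
          rintro X ⟨S, hS, hX⟩
          exact Set.mem_biUnion (Finset.mem_powersetCard_univ.mpr hS) hX
    _ ≤ ∑ S ∈ Finset.powersetCard k Finset.univ, Measure.pi (fun _ => μ) (F S) :=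
        measure_biUnion_finset_le _ _
    _ ≤ ∑ _S ∈ Finset.powersetCard k (Finset.univ : Finset ι), c ^ (k - 1) :=
        Finset.sum_le_sum fun S hS => hF S (Finset.mem_powersetCard_univ.mp hS)
    _ = _ := by simp

end Clusters

open Real

instance : IsProbabilityMeasure (volume : Measure (AddCircle (1 : ℝ))) :=
  ⟨by simp [AddCircle.measure_univ]⟩

theorem continuous_torusDist : Continuous fun p : Torus × Torus => torusDist p.1 p.2 := by
  unfold torusDist; fun_prop

theorem volume_setOf_torusDist_le (z : Torus) (ρ : ℝ) :
    volume {w : Torus | torusDist w z ≤ ρ} ≤ ENNReal.ofReal ((2 * ρ) ^ 2) := by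
  have hbox : {w : Torus | torusDist w z ≤ ρ} ⊆
      Metric.closedBall z.1 ρ ×ˢ Metric.closedBall z.2 ρ := by
    intro w hw
    have h := sqrt_le_sqrt <|
      le_add_of_nonneg_right (a := dist w.1 z.1 ^ 2) (sq_nonneg (dist w.2 z.2))
    have h' := sqrt_le_sqrt <|
      le_add_of_nonneg_left (a := dist w.2 z.2 ^ 2) (sq_nonneg (dist w.1 z.1))
    rw [sqrt_sq dist_nonneg] at h h'
    exact ⟨h.trans hw, h'.trans hw⟩
  calc _ ≤ volume (Metric.closedBall z.1 ρ ×ˢ Metric.closedBall z.2 ρ) := measure_mono hbox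
    _ ≤ ENNReal.ofReal |2 * ρ| * ENNReal.ofReal |2 * ρ| := by
        rw [Measure.volume_eq_prod, Measure.prod_prod, AddCircle.volume_closedBall,
          AddCircle.volume_closedBall]
        gcongr <;> exact (min_le_right _ _).trans (le_abs_self _)
    _ = _ := by rw [← ENNReal.ofReal_mul (abs_nonneg _), abs_mul_abs_self, sq]

theorem Pr_exists_finset_torusDist_le (n k : ℕ) (ρ : ℝ) :
    Pr n {X | ∃ S : Finset (Fin n), S.card = k ∧
        ∀ i ∈ S, ∀ j ∈ S, torusDist (X j) (X i) ≤ ρ} ≤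
      n.choose k * ((2 * ρ) ^ 2) ^ (k - 1) := by
  have hmeas (i j : Fin n) :
      MeasurableSet {X : Fin n → Torus | torusDist (X j) (X i) ≤ ρ} := by
    have hcont : Continuous fun X : Fin n → Torus => (X j, X i) := by fun_prop
    exact (isClosed_le (continuous_torusDist.comp hcont) continuous_const).measurableSet
  have h := measure_pi_exists_finset_forall_mem_le (volume : Measure Torus)
    (volume_setOf_torusDist_le · ρ) hmeas k
  rw [Fintype.card_fin] at h
  refine ENNReal.toReal_le_of_le_ofReal (by positivity) (h.trans_eq ?_)
  rw [ENNReal.ofReal_mul (by positivity), ENNReal.ofReal_pow (sq_nonneg (2 * ρ)),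
    ENNReal.ofReal_natCast]

theorem choose_succ_mul_pow_le (n m : ℕ) {x : ℝ} (hx : 0 ≤ x) :
    (n.choose (m + 1) : ℝ) * x ^ m ≤
      (exp 1 * n / (m + 1)) * (exp 1 * n * x / (m + 1)) ^ m := by
  -- `k^k / k! ≤ e^k` turns `n^k / k!` into `(e n / k)^k`
  have hfact : ((m + 1 : ℝ)) ^ (m + 1) ≤ (m + 1).factorial * exp 1 ^ (m + 1) := by
    have h := pow_div_factorial_le_exp (x := ((m + 1 : ℕ) : ℝ)) (by positivity) (m + 1)
    rw [div_le_iff₀ (by positivity), ← exp_one_pow] at h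
    exact_mod_cast h.trans_eq (mul_comm _ _)
  have hchoose : (n.choose (m + 1) : ℝ) ≤ (exp 1 * n / (m + 1)) ^ (m + 1) := by
    calc (n.choose (m + 1) : ℝ) ≤ (n : ℝ) ^ (m + 1) / (m + 1).factorial :=
          Nat.choose_le_pow_div _ _
      _ ≤ _ := by
          rw [div_pow, mul_pow, div_le_div_iff₀ (by positivity) (by positivity)]
          calc (n : ℝ) ^ (m + 1) * (m + 1 : ℝ) ^ (m + 1)
              ≤ n ^ (m + 1) * ((m + 1).factorial * exp 1 ^ (m + 1)) := by gcongr
            _ = _ := by ring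
  calc (n.choose (m + 1) : ℝ) * x ^ m ≤ (exp 1 * n / (m + 1)) ^ (m + 1) * x ^ m := by gcongr
    _ = _ := by rw [pow_succ', mul_div_right_comm _ x, mul_pow, mul_assoc]

theorem le_exp_mul_of_two_div_sq_le {a L : ℝ} (ha : 0 < a) (hL : 2 / a ^ 2 ≤ L) :
    L ≤ exp (a * L) := by
  have hL0 : 0 ≤ L := (by positivity : (0 : ℝ) ≤ 2 / a ^ 2).trans hL
  have h1 : 2 ≤ a ^ 2 * L := by rwa [div_le_iff₀' (by positivity)] at hL
  have h2 := quadratic_le_exp_of_nonneg (by positivity : 0 ≤ a * L)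
  nlinarith

theorem mul_sq_le_exp_neg_78 {ε : ℝ} (hε0 : 0 < ε) (hε : ε ≤ 1 / 10 ^ 18) :
    131 * ε ^ 2 ≤ exp (-78) := by
  have he : exp 78 ≤ 2.7182818286 ^ 78 := by
    rw [show (78 : ℝ) = (78 : ℕ) by norm_num, ← exp_one_pow]
    exact pow_le_pow_left₀ (exp_pos 1).le exp_one_lt_d9.le 78
  have hε2 : ε ^ 2 ≤ (1 / 10 ^ 18) ^ 2 := pow_le_pow_left₀ hε0.le hε 2
  rw [exp_neg, ← one_div, le_div_iff₀ (exp_pos _)]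
  calc 131 * ε ^ 2 * exp 78 ≤ 131 * (1 / 10 ^ 18) ^ 2 * 2.7182818286 ^ 78 := by gcongr
    _ ≤ 1 := by norm_num

theorem pi_mul_sq_mul_le_log_sub_log {r : ℕ → ℝ} {n : ℕ} {c : ℝ} (hc : 0 < c)
    (h : c ≤ mu r n) :
    π * r n ^ 2 * n ≤ log n - log c := by
  have hn : (n : ℝ) ≠ 0 := by
    rintro hn
    simp only [mu, hn, zero_mul] at h
    linarith
  have h' := log_le_log hc h
  rw [mu, log_mul hn (exp_pos _).ne', log_exp] at h'
  linarith

theorem exp_one_mul_mul_sq_div_le {ε c k : ℝ} {r : ℕ → ℝ} {n : ℕ} (hε0 : 0 < ε)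
    (hε : ε ≤ 1 / 10 ^ 18) (hc : 0 < c) (hμ : c ≤ mu r n) (hLc : 100 * |log c| ≤ log n)
    (hk : log n / 37 < k) :
    exp 1 * n * (2 * (ε * r n)) ^ 2 / k ≤ exp (-78) := by
  have hL : 0 ≤ log n := (by positivity : (0 : ℝ) ≤ 100 * |log c|).trans hLc
  have hk0 : 0 < k := (by positivity : (0 : ℝ) ≤ log n / 37).trans_lt hk
  have hrn : r n ^ 2 * n ≤ 1.01 / 3.14 * (37 * k) := by
    have h := pi_mul_sq_mul_le_log_sub_log hc hμ
    have hπ : 3.14 * (r n ^ 2 * n) ≤ π * r n ^ 2 * n := by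
      rw [mul_assoc]; gcongr; exact pi_gt_d2.le
    linarith [neg_abs_le (log c)]
  rw [div_le_iff₀ hk0]
  calc exp 1 * n * (2 * (ε * r n)) ^ 2 = 4 * exp 1 * ε ^ 2 * (r n ^ 2 * n) := by ring
    _ ≤ 4 * 2.7182818286 * ε ^ 2 * (1.01 / 3.14 * (37 * k)) := by
        gcongr; exact exp_one_lt_d9.le
    _ = (4 * 2.7182818286 * (1.01 / 3.14) * 37) * ε ^ 2 * k := by ring
    _ ≤ 131 * ε ^ 2 * k := by gcongr; norm_num
    _ ≤ exp (-78) * k := by gcongr; exact mul_sq_le_exp_neg_78 hε0 hε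

theorem mul_exp_neg_78_pow_floor_le {n : ℕ} (hL : 30423 ≤ log n) :
    n * exp (-78) ^ ⌊log n / 37⌋₊ ≤ exp 78 / (n ^ (1.1 : ℝ) * log n) := by
  set L := log n with hLdef
  have hn : (0 : ℝ) < n := Nat.cast_pos.mpr <| Nat.pos_of_ne_zero <| by
    rintro rfl
    norm_num [hLdef] at hL
  have hm : L / 37 - 1 < ⌊L / 37⌋₊ := by linarith [Nat.lt_floor_add_one (L / 37)]
  have hLexp : L ≤ exp (3 / 370 * L) := le_exp_mul_of_two_div_sq_le (by norm_num) (by linarith)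
  calc (n : ℝ) * exp (-78) ^ ⌊L / 37⌋₊ = exp (L - 78 * ⌊L / 37⌋₊) := by
        rw [← exp_nat_mul, hLdef, sub_eq_add_neg, exp_add, exp_log hn]; ring_nf
    _ ≤ exp (78 - 41 / 37 * L) := exp_le_exp.mpr (by linarith)
    _ = exp 78 / (exp (L * 1.1) * exp (3 / 370 * L)) := by
        rw [← exp_add, ← exp_sub]; ring_nf
    _ ≤ exp 78 / (n ^ (1.1 : ℝ) * L) := by
        rw [rpow_def_of_pos hn]
        gcongr

theorem choose_mul_sq_pow_floor_le {ε c : ℝ} {r : ℕ → ℝ} {n : ℕ} (hε0 : 0 < ε)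
    (hε : ε ≤ 1 / 10 ^ 18) (hc : 0 < c) (hμ : c ≤ mu r n) (hLc : 100 * |log c| ≤ log n)
    (hL : 30423 ≤ log n) :
    (n.choose (⌊log n / 37⌋₊ + 1) : ℝ) * ((2 * (ε * r n)) ^ 2) ^ ⌊log n / 37⌋₊ ≤
      exp 78 / (n ^ (1.1 : ℝ) * log n) := by
  set m := ⌊log n / 37⌋₊
  have hk : log n / 37 < m + 1 := Nat.lt_floor_add_one _
  have hfactor : exp 1 * n / (m + 1) ≤ n := by
    rw [div_le_iff₀ (by positivity)]
    have : exp 1 ≤ m + 1 := by linarith [exp_one_lt_d9]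
    exact (mul_le_mul_of_nonneg_right this n.cast_nonneg).trans_eq (mul_comm _ _)
  calc _ ≤ (exp 1 * n / (m + 1)) * (exp 1 * n * (2 * (ε * r n)) ^ 2 / (m + 1)) ^ m :=
        choose_succ_mul_pow_le n m (sq_nonneg _)
    _ ≤ n * exp (-78) ^ m :=
        mul_le_mul hfactor (pow_le_pow_left₀ (by positivity)
          (exp_one_mul_mul_sq_div_le hε0 hε hc hμ hLc hk) m) (by positivity) n.cast_nonneg
    _ ≤ _ := mul_exp_neg_78_pow_floor_le hL

theorem prob_type2_components_general
    (ε : ℝ) (hε0 : 0 < ε) (hε : ε ≤ 1 / 10 ^ 18)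
    (r : ℕ → ℝ)
    (hμ : ∃ c₁ c₂ : ℝ, 0 < c₁ ∧ c₁ ≤ c₂ ∧
      ∀ᶠ n : ℕ in atTop, c₁ ≤ mu r n ∧ mu r n ≤ c₂) :
    ∃ C : ℝ, ∀ᶠ n : ℕ in atTop,
      Pr n {X | ∃ c : (geomGraph n (r n) X).ConnectedComponent,
        (∀ u ∈ c.supp, ∀ v ∈ c.supp, torusDist (X u) (X v) ≤ ε * r n) ∧
        Real.log n / 37 < (c.supp.ncard : ℝ)} ≤
      C / ((n : ℝ) ^ (1.1 : ℝ) * Real.log n) := by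
  obtain ⟨c₁, _, hc₁, -, hev⟩ := hμ
  have hlog := tendsto_log_atTop.comp tendsto_natCast_atTop_atTop
  refine ⟨exp 78, ?_⟩
  filter_upwards [hev, hlog.eventually_ge_atTop (100 * |log c₁|),
    hlog.eventually_ge_atTop 30423] with n hμn hLc hL
  have hsub : {X : Fin n → Torus | ∃ c : (geomGraph n (r n) X).ConnectedComponent,
      (∀ u ∈ c.supp, ∀ v ∈ c.supp, torusDist (X u) (X v) ≤ ε * r n) ∧
        log n / 37 < (c.supp.ncard : ℝ)} ⊆
      {X | ∃ S : Finset (Fin n), S.card = ⌊log n / 37⌋₊ + 1 ∧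
        ∀ i ∈ S, ∀ j ∈ S, torusDist (X j) (X i) ≤ ε * r n} := by
    rintro X ⟨c, hdiam, hsize⟩
    obtain ⟨t, hts, ht⟩ := Set.exists_subset_card_eq
      ((Nat.floor_lt (by positivity)).mpr hsize)
    exact ⟨t.toFinite.toFinset, by rw [← Set.ncard_eq_toFinset_card, ht],
      fun i hi j hj => hdiam j (hts (by simpa using hj)) i (hts (by simpa using hi))⟩
  calc _ ≤ Pr n _ := ENNReal.toReal_mono (measure_ne_top _ _) (measure_mono hsub)
    _ ≤ _ := Pr_exists_finset_torusDist_le n _ _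
    _ ≤ _ := choose_mul_sq_pow_floor_le hε0 hε hc₁ hμn.1 hLc hL

/-- **components of type 2.** For fixed `0 < ε ≤ 10⁻¹⁸`, if `μ = Θ(1)` then
the probability that `G(X;r)` has a component of diameter at most `εr` and size greater
than `(log n)/37` is `O(1/(n^{1.1} log n))`. -/
theorem prob_type2_components
    (ε : ℝ) (hε0 : 0 < ε) (hε : ε ≤ 1 / 10 ^ 18)
    (r : ℕ → ℝ) (hr : ∀ n, 0 < r n)
    (hμ : ∃ c₁ c₂ : ℝ, 0 < c₁ ∧ c₁ ≤ c₂ ∧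
      ∀ᶠ n : ℕ in atTop, c₁ ≤ mu r n ∧ mu r n ≤ c₂) :
    ∃ C : ℝ, ∀ᶠ n : ℕ in atTop,
      Pr n {X | ∃ c : (geomGraph n (r n) X).ConnectedComponent,
        (∀ u ∈ c.supp, ∀ v ∈ c.supp, torusDist (X u) (X v) ≤ ε * r n) ∧
        Real.log n / 37 < (c.supp.ncard : ℝ)} ≤
      C / ((n : ℝ) ^ (1.1 : ℝ) * Real.log n) :=
  prob_type2_components_general ε hε0 hε r hμ
end
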